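/- The map α ↦ (|t|^α mod Λ) from ℝ to the value group R_{>0}/Λ of the valuation |·|_♭ on C is an order-reversing group isomorphism; in particular the value group of C^× is isomorphic to (ℝ, +), and for every z ∈ C^× one has |z|_♭ = |t|_♭^{std(log|z|/log|t|)} once an identification sending |t| mod Λ to a fixed τ ∈ (0,1) is chosen. -/

import Mathlib

open Filter

noncomputable section

abbrev starC (𝒰 : Ultrafilter ℂ) : Type := Filter.Germ (𝒰 : Filter ℂ) ℂ
abbrev starR (𝒰 : Ultrafilter ℂ) : Type := Filter.Germ (𝒰 : Filter ℂ) ℝ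

variable (𝒰 : Ultrafilter ℂ)

def tC : starC 𝒰 := ↑(fun s : ℂ => s)
def absG (z : starC 𝒰) : starR 𝒰 := z.map (fun w => ‖w‖)
def tAbs : starR 𝒰 := absG 𝒰 (tC 𝒰)
def tBoundedR (a : starR 𝒰) : Prop := ∃ N : ℕ, 0 < N ∧ |a| ≤ (tAbs 𝒰)⁻¹ ^ N
def tNegligibleR (a : starR 𝒰) : Prop := ∀ N : ℕ, 0 < N → |a| ≤ (tAbs 𝒰) ^ N
def tBoundedC (a : starC 𝒰) : Prop := ∃ N : ℕ, 0 < N ∧ absG 𝒰 a ≤ (tAbs 𝒰)⁻¹ ^ N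
def tNegligibleC (a : starC 𝒰) : Prop := ∀ N : ℕ, 0 < N → absG 𝒰 a ≤ (tAbs 𝒰) ^ N

/-- The germ `|t|^α ∈ *ℝ`, for a real exponent `α`. -/
def tpow (α : ℝ) : starR 𝒰 := ↑(fun s : ℂ => ‖s‖ ^ α)

/-- Two positive elements of `*ℝ` represent the same class in the value group
`R_{>0}/Λ`, where `Λ = {r > 0 : |t|^{1/N} ≤ r ≤ |t|^{-1/N} for all N > 0}`:
their ratio lies in (the lift of) `Λ`. -/
def valEq (r s : starR 𝒰) : Prop :=
  0 < r ∧ 0 < s ∧ ∀ N : ℕ, 0 < N → tAbs 𝒰 ≤ (r / s) ^ N ∧ (r / s) ^ N ≤ (tAbs 𝒰)⁻¹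

/-- The germ of `log : ℝ → ℝ`. -/
def logG (r : starR 𝒰) : starR 𝒰 := r.map Real.log

section helpers

abbrev A : ℂ → ℝ := fun s => ‖s‖

lemma tAbs_eq : tAbs 𝒰 = (↑A : starR 𝒰) := rfl

lemma ev_ne (hnp : ∀ z : ℂ, 𝒰 ≠ pure z) : ∀ᶠ s in (𝒰 : Filter ℂ), s ≠ 0 := by
  by_contra h
  have hc : {s : ℂ | s ≠ 0}ᶜ ∈ 𝒰 := Ultrafilter.compl_mem_iff_notMem.2 h
  have h1 : {(0 : ℂ)} ∈ (𝒰 : Filter ℂ) := by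
    convert (Ultrafilter.mem_coe.2 hc) using 1
    ext s; simp [eq_comm]
  have : (𝒰 : Filter ℂ) = pure (0 : ℂ) := ((𝒰.neBot).eq_pure_iff).2 h1
  exact hnp 0 (Ultrafilter.coe_injective (by simpa using this))

lemma ev_small (h0 : (𝒰 : Filter ℂ) ≤ nhds 0) {ε : ℝ} (hε : 0 < ε) :
    ∀ᶠ s in (𝒰 : Filter ℂ), ‖s‖ < ε := by
  have := h0 (Metric.ball_mem_nhds (0 : ℂ) hε)
  filter_upwards [this] with s hs
  simpa [Complex.dist_eq] using hs

lemma ev_base (hnp : ∀ z : ℂ, 𝒰 ≠ pure z) (h0 : (𝒰 : Filter ℂ) ≤ nhds 0) :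
    ∀ᶠ s in (𝒰 : Filter ℂ), 0 < A s ∧ A s < 1 := by
  filter_upwards [ev_ne 𝒰 hnp, ev_small 𝒰 h0 one_pos] with s h1 h2
  exact ⟨norm_pos_iff.2 h1, h2⟩

/-- the key lemma: a positive germ pinched between two powers of `|t|` is
`Λ`-equivalent to `|t|^α` for `α` the ultralimit of `log g / log |t|`. -/
lemma key (hnp : ∀ z : ℂ, 𝒰 ≠ pure z) (h0 : (𝒰 : Filter ℂ) ≤ nhds 0)
    (g : ℂ → ℝ) (N₀ N₁ : ℕ)
    (hb : ∀ᶠ s in (𝒰 : Filter ℂ), A s ^ (N₁ : ℝ) < g s ∧ g s ≤ A s ^ (-(N₀ : ℝ))) :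
    ∃ α : ℝ,
      (∀ ε : ℝ, 0 < ε → ∀ᶠ s in (𝒰 : Filter ℂ),
        |Real.log (g s) / Real.log (A s) - α| ≤ ε) ∧
      valEq 𝒰 (↑g) (tpow 𝒰 α) := by
  set h : ℂ → ℝ := fun s => Real.log (g s) / Real.log (A s) with hh
  have hbase := ev_base 𝒰 hnp h0
  have hmem : ∀ᶠ s in (𝒰 : Filter ℂ), h s ∈ Set.Icc (-(N₀ : ℝ)) (N₁ : ℝ) := by
    filter_upwards [hbase, hb] with s hs hbs
    obtain ⟨hA0, hA1⟩ := hs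
    have hlogA : Real.log (A s) < 0 := Real.log_neg hA0 hA1
    have hg0 : 0 < g s := lt_of_le_of_lt (Real.rpow_nonneg hA0.le _) hbs.1
    have hlow : (N₁ : ℝ) * Real.log (A s) < Real.log (g s) := by
      have := Real.log_lt_log (Real.rpow_pos_of_pos hA0 _) hbs.1
      rwa [Real.log_rpow hA0] at this
    have hhigh : Real.log (g s) ≤ -(N₀ : ℝ) * Real.log (A s) := by
      have := Real.log_le_log hg0 hbs.2
      rwa [Real.log_rpow hA0] at this
    constructor
    · rw [le_div_iff_of_neg hlogA]
      exact hhigh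
    · rw [div_le_iff_of_neg hlogA]
      exact hlow.le
  obtain ⟨α, -, hconv⟩ := (isCompact_Icc (a := -(N₀ : ℝ)) (b := (N₁ : ℝ))).ultrafilter_le_nhds
    (𝒰.map h) (by rwa [Ultrafilter.coe_map, le_principal_iff, mem_map])
  have hclose : ∀ ε : ℝ, 0 < ε → ∀ᶠ s in (𝒰 : Filter ℂ), |h s - α| < ε := by
    intro ε hε
    have := hconv (Metric.ball_mem_nhds α hε)
    rw [Ultrafilter.coe_map, mem_map] at this
    filter_upwards [this] with s hs
    have hs' : dist (h s) α < ε := hs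
    rwa [Real.dist_eq] at hs'
  refine ⟨α, fun ε hε => (hclose ε hε).mono fun s hs => hs.le, ?_, ?_, ?_⟩
  · -- 0 < ↑g
    rw [show (0 : starR 𝒰) = ((0 : ℂ → ℝ) : starR 𝒰) from rfl, Filter.Germ.coe_lt]
    filter_upwards [hbase, hb] with s hs hbs
    exact lt_of_le_of_lt (Real.rpow_nonneg hs.1.le _) hbs.1
  · -- 0 < tpow α
    rw [show (0 : starR 𝒰) = ((0 : ℂ → ℝ) : starR 𝒰) from rfl, tpow, Filter.Germ.coe_lt]
    filter_upwards [hbase] with s hs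
    exact Real.rpow_pos_of_pos hs.1 α
  · intro N hN
    have hratio : ((↑g : starR 𝒰) / tpow 𝒰 α) ^ N
        = ((fun s => (g s / A s ^ α) ^ N : ℂ → ℝ) : starR 𝒰) := by
      rw [tpow, ← Filter.Germ.coe_div, ← Filter.Germ.coe_pow]
      rfl
    have hNR : (1 : ℝ) ≤ (N : ℝ) := by exact_mod_cast hN
    have hN0 : (0 : ℝ) < (N : ℝ) := by positivity
    have key2 : ∀ᶠ s in (𝒰 : Filter ℂ),
        A s ≤ (g s / A s ^ α) ^ N ∧ (g s / A s ^ α) ^ N ≤ (A s)⁻¹ := by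
      filter_upwards [hbase, hb, hclose (1 / (2 * N)) (by positivity)] with s hs hbs hcs
      obtain ⟨hA0, hA1⟩ := hs
      have hlogA : Real.log (A s) ≠ 0 := (Real.log_neg hA0 hA1).ne
      have hg0 : 0 < g s := lt_of_le_of_lt (Real.rpow_nonneg hA0.le _) hbs.1
      have hgA : A s ^ h s = g s := by
        rw [Real.rpow_def_of_pos hA0]
        show Real.exp (Real.log (A s) * (Real.log (g s) / Real.log (A s))) = g s
        rw [mul_comm, div_mul_cancel₀ _ hlogA, Real.exp_log hg0]
      have hcalc : (g s / A s ^ α) ^ N = A s ^ ((h s - α) * (N : ℝ)) := by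
        rw [← hgA, ← Real.rpow_sub hA0, Real.rpow_mul hA0.le, Real.rpow_natCast]
      have habs : |(h s - α) * (N : ℝ)| ≤ 1 := by
        rw [abs_mul, abs_of_pos hN0]
        calc |h s - α| * (N : ℝ) ≤ (1 / (2 * N)) * N := by
              exact mul_le_mul_of_nonneg_right hcs.le hN0.le
          _ = 1 / 2 := by field_simp
          _ ≤ 1 := by norm_num
      obtain ⟨hb1, hb2⟩ := abs_le.1 habs
      constructor
      · calc A s = A s ^ (1 : ℝ) := (Real.rpow_one _).symm
          _ ≤ A s ^ ((h s - α) * (N : ℝ)) :=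
            Real.rpow_le_rpow_of_exponent_ge hA0 hA1.le hb2
          _ = (g s / A s ^ α) ^ N := hcalc.symm
      · calc (g s / A s ^ α) ^ N = A s ^ ((h s - α) * (N : ℝ)) := hcalc
          _ ≤ A s ^ (-1 : ℝ) := Real.rpow_le_rpow_of_exponent_ge hA0 hA1.le hb1
          _ = (A s)⁻¹ := Real.rpow_neg_one _
    constructor
    · rw [hratio, tAbs_eq, Filter.Germ.coe_le]
      exact key2.mono fun s hs => hs.1
    · rw [hratio, tAbs_eq, ← Filter.Germ.coe_inv, Filter.Germ.coe_le]
      exact key2.mono fun s hs => hs.2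

end helpers

/-- The map `α ↦ (|t|^α mod Λ)` is an order-reversing group isomorphism from `(ℝ, +)`
onto the value group `R_{>0}/Λ` of the valuation `|·|_♭` on `C`; in particular the value
group of `C^×` is isomorphic to `(ℝ, +)`, and for every `z ∈ C^×` one has
`|z|_♭ = |t|_♭^{std(log|z|/log|t|)}`. -/
theorem stmt4 (hnp : ∀ z : ℂ, 𝒰 ≠ pure z) (h0 : (𝒰 : Filter ℂ) ≤ nhds 0) :
    -- group homomorphism (even exactly at the level of representatives):
    (∀ α β : ℝ, tpow 𝒰 (α + β) = tpow 𝒰 α * tpow 𝒰 β) ∧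
    -- order-reversing (hence injective):
    (∀ α β : ℝ, α < β → tpow 𝒰 β < tpow 𝒰 α ∧ ¬ valEq 𝒰 (tpow 𝒰 α) (tpow 𝒰 β)) ∧
    -- surjective onto the value group `|C^×| = R_{>0}/Λ`:
    (∀ r : starR 𝒰, 0 < r → tBoundedR 𝒰 r → ¬ tNegligibleR 𝒰 r →
        ∃ α : ℝ, valEq 𝒰 r (tpow 𝒰 α)) ∧
    -- the formula `|z|_♭ = |t|_♭ ^ std(log|z|/log|t|)` for `z ∈ C^×`:
    (∀ z : starC 𝒰, tBoundedC 𝒰 z → ¬ tNegligibleC 𝒰 z →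
        ∃ α : ℝ,
          (∀ ε : ℝ, 0 < ε →
            |logG 𝒰 (absG 𝒰 z) / logG 𝒰 (tAbs 𝒰) - ↑(fun _ : ℂ => α)| ≤ ↑(fun _ : ℂ => ε)) ∧
          valEq 𝒰 (absG 𝒰 z) (tpow 𝒰 α)) := by
  have hbase := ev_base 𝒰 hnp h0
  refine ⟨?_, ?_, ?_, ?_⟩
  · -- group hom
    intro α β
    rw [tpow, tpow, tpow, ← Filter.Germ.coe_mul, Filter.Germ.coe_eq]
    filter_upwards [hbase] with s hs
    exact Real.rpow_add hs.1 α β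
  · -- order-reversing
    intro α β hab
    constructor
    · rw [tpow, tpow, Filter.Germ.coe_lt]
      filter_upwards [hbase] with s hs
      exact Real.rpow_lt_rpow_of_exponent_gt hs.1 hs.2 hab
    · rintro ⟨-, -, hΛ⟩
      obtain ⟨N, hNgt⟩ := exists_nat_gt ((β - α)⁻¹)
      have hba : 0 < β - α := sub_pos.2 hab
      have hinv : 0 < (β - α)⁻¹ := inv_pos.2 hba
      have hN0 : 0 < N := by exact_mod_cast hinv.trans hNgt
      have h1N : 1 < (N : ℝ) * (β - α) := by
        have := mul_lt_mul_of_pos_right hNgt hba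
        rwa [inv_mul_cancel₀ hba.ne'] at this
      have hle := (hΛ N hN0).2
      have hlt : (tAbs 𝒰)⁻¹ < (tpow 𝒰 α / tpow 𝒰 β) ^ N := by
        have hr : (tpow 𝒰 α / tpow 𝒰 β) ^ N
            = ((fun s => (A s ^ α / A s ^ β) ^ N : ℂ → ℝ) : starR 𝒰) := by
          rw [tpow, tpow, ← Filter.Germ.coe_div, ← Filter.Germ.coe_pow]; rfl
        rw [hr, tAbs_eq, ← Filter.Germ.coe_inv, Filter.Germ.coe_lt]
        filter_upwards [hbase] with s hs
        obtain ⟨hA0, hA1⟩ := hs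
        have hcalc : (A s ^ α / A s ^ β) ^ N = A s ^ ((α - β) * (N : ℝ)) := by
          rw [← Real.rpow_sub hA0, Real.rpow_mul hA0.le, Real.rpow_natCast]
        have hexp : (α - β) * (N : ℝ) < -1 := by nlinarith
        calc (A s)⁻¹ = A s ^ (-1 : ℝ) := (Real.rpow_neg_one _).symm
          _ < A s ^ ((α - β) * (N : ℝ)) :=
            Real.rpow_lt_rpow_of_exponent_gt hA0 hA1 hexp
          _ = (A s ^ α / A s ^ β) ^ N := hcalc.symm
      exact absurd hle (not_le.2 hlt)
  · -- surjectivity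
    intro r hr hbdd hneg
    induction r using Filter.Germ.inductionOn with
    | h g =>
      obtain ⟨N₀, hN₀, hb⟩ := hbdd
      rw [abs_of_pos hr] at hb
      simp only [tNegligibleR] at hneg
      push_neg at hneg
      obtain ⟨N₁, hN₁, hgt⟩ := hneg
      rw [abs_of_pos hr] at hgt
      -- translate the germ inequalities to eventual statements
      have hb2 : (↑g : starR 𝒰) ≤ ↑(fun s => ((A s)⁻¹) ^ N₀ : ℂ → ℝ) := by
        convert hb using 1
        rfl
      have hb' : ∀ᶠ s in (𝒰 : Filter ℂ), g s ≤ ((A s)⁻¹) ^ N₀ :=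
        Filter.Germ.coe_le.1 hb2
      have hgt2 : (↑(fun s => (A s) ^ N₁ : ℂ → ℝ) : starR 𝒰) < ↑g := by
        convert hgt using 1
        rfl
      have hgt' : ∀ᶠ s in (𝒰 : Filter ℂ), (A s) ^ N₁ < g s :=
        Filter.Germ.coe_lt.1 hgt2
      have hev : ∀ᶠ s in (𝒰 : Filter ℂ),
          A s ^ (N₁ : ℝ) < g s ∧ g s ≤ A s ^ (-(N₀ : ℝ)) := by
        filter_upwards [hbase, hb', hgt'] with s hs h1 h2
        obtain ⟨hA0, -⟩ := hs
        constructor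
        · rwa [Real.rpow_natCast]
        · rwa [Real.rpow_neg hA0.le, Real.rpow_natCast, ← inv_pow]
      obtain ⟨α, -, hval⟩ := key 𝒰 hnp h0 g N₀ N₁ hev
      exact ⟨α, hval⟩
  · -- the formula
    intro z hbdd hneg
    induction z using Filter.Germ.inductionOn with
    | h f =>
      set g : ℂ → ℝ := fun s => ‖f s‖ with hg
      have habsG : absG 𝒰 ↑f = (↑g : starR 𝒰) := rfl
      obtain ⟨N₀, hN₀, hb⟩ := hbdd
      simp only [tNegligibleC] at hneg
      push_neg at hneg
      obtain ⟨N₁, hN₁, hgt⟩ := hneg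
      rw [habsG] at hb hgt
      have hb2 : (↑g : starR 𝒰) ≤ ↑(fun s => ((A s)⁻¹) ^ N₀ : ℂ → ℝ) := by
        convert hb using 1
        rfl
      have hb' : ∀ᶠ s in (𝒰 : Filter ℂ), g s ≤ ((A s)⁻¹) ^ N₀ :=
        Filter.Germ.coe_le.1 hb2
      have hgt2 : (↑(fun s => (A s) ^ N₁ : ℂ → ℝ) : starR 𝒰) < ↑g := by
        convert hgt using 1
        rfl
      have hgt' : ∀ᶠ s in (𝒰 : Filter ℂ), (A s) ^ N₁ < g s :=
        Filter.Germ.coe_lt.1 hgt2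
      have hev : ∀ᶠ s in (𝒰 : Filter ℂ),
          A s ^ (N₁ : ℝ) < g s ∧ g s ≤ A s ^ (-(N₀ : ℝ)) := by
        filter_upwards [hbase, hb', hgt'] with s hs h1 h2
        obtain ⟨hA0, -⟩ := hs
        constructor
        · rwa [Real.rpow_natCast]
        · rwa [Real.rpow_neg hA0.le, Real.rpow_natCast, ← inv_pow]
      obtain ⟨α, hclose, hval⟩ := key 𝒰 hnp h0 g N₀ N₁ hev
      refine ⟨α, ?_, by rwa [habsG]⟩
      intro ε hε
      have hgerm : |logG 𝒰 (absG 𝒰 ↑f) / logG 𝒰 (tAbs 𝒰) - ((fun _ : ℂ => α) : ℂ → ℝ)|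
          = ((fun s => |Real.log (g s) / Real.log (A s) - α| : ℂ → ℝ) : starR 𝒰) := by
        rw [Filter.Germ.abs_def]
        rfl
      rw [hgerm, Filter.Germ.coe_le]
      exact hclose ε hε

end
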